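/- arXiv:1512.04039 — 4 statements merged into one kernel-verified Lean document; each statement's English description precedes it below -/
import Mathlib

section
/- Let {P_1,…,P_K} be a partition of {1,…,n} and let G be the block-diagonal part of XᵀX with respect to this partition (G_ij = (XᵀX)_ij whenever i,j lie in the same block, 0 otherwise). Then for every h ∈ R^n, hᵀ XᵀX h ≤ K · hᵀ G h. Consequently, for any ν ∈ [0,1], the subproblem parameter σ' := νK satisfies σ' ≥ ν · max{ hᵀ XᵀX h : hᵀ G h ≤ 1 }. -/
open Matrix

/-- With G the block-diagonal part of XᵀX w.r.t. a partition of the columns,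
hᵀXᵀXh ≤ K·hᵀGh for every h; consequently, for any ν ∈ [0,1] the choice
σ' := νK satisfies σ' ≥ ν·max{ hᵀXᵀXh : hᵀGh ≤ 1 }. -/
theorem blockDiagonal_quadratic_bound
    {d n K : ℕ} (X : Matrix (Fin d) (Fin n) ℝ) (P : Fin n → Fin K)
    (G : Matrix (Fin n) (Fin n) ℝ)
    (hG : ∀ i j, G i j = if P i = P j then (X.transpose * X) i j else 0) :
    (∀ h : Fin n → ℝ, h ⬝ᵥ (X.transpose * X).mulVec h ≤ K * (h ⬝ᵥ G.mulVec h)) ∧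
    (∀ ν : ℝ, ν ∈ Set.Icc (0 : ℝ) 1 →
      ∀ h : Fin n → ℝ, h ⬝ᵥ G.mulVec h ≤ 1 →
        ν * (h ⬝ᵥ (X.transpose * X).mulVec h) ≤ ν * K) := by
  have key : ∀ h : Fin n → ℝ,
      h ⬝ᵥ (X.transpose * X).mulVec h ≤ K * (h ⬝ᵥ G.mulVec h) := by
    intro h
    set hk : Fin K → Fin n → ℝ := fun k i => if P i = k then h i else 0 with hhk
    have quad : ∀ v : Fin n → ℝ,
        v ⬝ᵥ (X.transpose * X).mulVec v = ∑ a, (X.mulVec v a) ^ 2 := by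
      intro v
      rw [← mulVec_mulVec, dotProduct_mulVec, vecMul_transpose]
      simp [dotProduct, sq]
    have term : ∀ i j, (∑ k, hk k i * ((X.transpose * X) i j * hk k j))
        = h i * (G i j * h j) := by
      intro i j
      rw [hG]
      rcases eq_or_ne (P i) (P j) with hpe | hpn
      · rw [if_pos hpe, Finset.sum_eq_single (P i)]
        · simp [hhk, hpe.symm]
        · intro b _ hb
          simp [hhk, Ne.symm hb]
        · simp
      · rw [if_neg hpn]
        simp only [mul_zero, zero_mul]
        apply Finset.sum_eq_zero
        intro b _
        rcases eq_or_ne (P i) b with rfl | hib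
        · have hji : P j ≠ P i := fun hc => hpn hc.symm
          simp [hhk, hji]
        · simp [hhk, hib]
    have hGsum : h ⬝ᵥ G.mulVec h
        = ∑ k, (hk k) ⬝ᵥ (X.transpose * X).mulVec (hk k) := by
      symm
      calc ∑ k, (hk k) ⬝ᵥ (X.transpose * X).mulVec (hk k)
          = ∑ k, ∑ i, ∑ j, hk k i * ((X.transpose * X) i j * hk k j) := by
            simp [dotProduct, mulVec, Finset.mul_sum]
        _ = ∑ i, ∑ j, ∑ k, hk k i * ((X.transpose * X) i j * hk k j) := by
            rw [Finset.sum_comm]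
            refine Finset.sum_congr rfl fun i _ => ?_
            rw [Finset.sum_comm]
        _ = ∑ i, ∑ j, h i * (G i j * h j) := by
            refine Finset.sum_congr rfl fun i _ => Finset.sum_congr rfl fun j _ => term i j
        _ = h ⬝ᵥ G.mulVec h := by
            simp [dotProduct, mulVec, Finset.mul_sum]
    have hdec : ∀ a, X.mulVec h a = ∑ k, X.mulVec (hk k) a := by
      intro a
      symm
      simp only [mulVec, dotProduct, hhk]
      rw [Finset.sum_comm]
      refine Finset.sum_congr rfl fun j _ => ?_
      rw [← Finset.mul_sum]
      simp
    calc h ⬝ᵥ (X.transpose * X).mulVec h = ∑ a, (X.mulVec h a) ^ 2 := quad h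
      _ = ∑ a, (∑ k, X.mulVec (hk k) a) ^ 2 := by simp_rw [hdec]
      _ ≤ ∑ a : Fin d, (K : ℝ) * ∑ k, (X.mulVec (hk k) a) ^ 2 := by
          refine Finset.sum_le_sum fun a _ => ?_
          have := sq_sum_le_card_mul_sum_sq (s := (Finset.univ : Finset (Fin K)))
            (f := fun k => X.mulVec (hk k) a)
          simpa using this
      _ = K * (h ⬝ᵥ G.mulVec h) := by
          rw [← Finset.mul_sum, hGsum, Finset.sum_comm]
          congr 1
          exact Finset.sum_congr rfl fun k _ => (quad (hk k)).symm
  refine ⟨key, ?_⟩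
  intro ν hν h hGh
  rcases hν with ⟨h0, _⟩
  apply mul_le_mul_of_nonneg_left _ h0
  calc h ⬝ᵥ (X.transpose * X).mulVec h ≤ K * (h ⬝ᵥ G.mulVec h) := key h
    _ ≤ K * 1 := mul_le_mul_of_nonneg_left hGh (Nat.cast_nonneg K)
    _ = K := mul_one _
end

section
/- Let D(α) = −f(α) − R(α), where R(α) = (1/n)Σ_i ℓ_i*(−α_i) with each ℓ_i* convex, and f satisfies f(α+h) ≤ f(α) + ⟨∇f(α),h⟩ + (1/(2λn²)) hᵀ XᵀX h. Let {P_k} be a partition of {1,…,n}, ν ∈ [0,1], and σ' ≥ ν·max{hᵀXᵀXh : hᵀGh ≤ 1} where G is the block-diagonal part of XᵀX. Define the local objectives G_k^{σ'}(h_{[k]}; α) := −f(α)/K − ⟨∇f(α), h_{[k]}⟩ − (σ'/(2λn²))‖X_{[k]} h_{[k]}‖² − R_k(α_{[k]} + h_{[k]}), where R_k sums ℓ_i*(−·)/n over i ∈ P_k. Then for all α and all h = Σ_k h_{[k]} with supp(h_{[k]}) ⊆ P_k: D(α + ν h) ≥ (1−ν) D(α) + ν Σ_{k=1}^K G_k^{σ'}(h_{[k]};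 α). -/
open Matrix

/-- The sum of the CoCoA+ local subproblem objectives is a block-separable lower
bound on the dual objective D: for any admissible ν, σ',
D(α + ν Σ_k h_[k]) ≥ (1−ν) D(α) + ν Σ_k G_k^{σ'}(h_[k]; α). -/
theorem local_subproblems_lower_bound_dual
    {d n K : ℕ} (hK : 0 < K) (hn : 1 ≤ n) (lam : ℝ) (hlam : 0 < lam)
    (X : Matrix (Fin d) (Fin n) ℝ) (P : Fin n → Fin K)
    (lstar : Fin n → ℝ → ℝ)
    (hlconv : ∀ i, ConvexOn ℝ Set.univ (lstar i))
    (f : (Fin n → ℝ) → ℝ) (gradf : (Fin n → ℝ) → (Fin n → ℝ))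
    (hf : ∀ α h : Fin n → ℝ,
      f (α + h) ≤ f α + gradf α ⬝ᵥ h
        + (1 / (2 * lam * (n : ℝ) ^ 2)) * (X.mulVec h ⬝ᵥ X.mulVec h))
    (G : Matrix (Fin n) (Fin n) ℝ)
    (hG : ∀ i j, G i j = if P i = P j then (X.transpose * X) i j else 0)
    (ν σ' : ℝ) (hν : ν ∈ Set.Icc (0 : ℝ) 1)
    (hσ' : ∀ h : Fin n → ℝ,
      ν * (h ⬝ᵥ (X.transpose * X).mulVec h) ≤ σ' * (h ⬝ᵥ G.mulVec h))
    (R : (Fin n → ℝ) → ℝ)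
    (hR : ∀ α : Fin n → ℝ, R α = (1 / (n : ℝ)) * ∑ i, lstar i (-(α i)))
    (D : (Fin n → ℝ) → ℝ) (hD : ∀ α, D α = -f α - R α)
    (α : Fin n → ℝ) (hk : Fin K → (Fin n → ℝ))
    (hsupp : ∀ k i, P i ≠ k → hk k i = 0)
    (Gk : Fin K → ℝ)
    (hGk : ∀ k, Gk k =
      -(f α / K) - gradf α ⬝ᵥ hk k
        - (σ' / (2 * lam * (n : ℝ) ^ 2)) * (X.mulVec (hk k) ⬝ᵥ X.mulVec (hk k))
        - (1 / (n : ℝ)) * ∑ i ∈ Finset.univ.filter (fun i => P i = k),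
            lstar i (-(α i + hk k i))) :
    (1 - ν) * D α + ν * ∑ k, Gk k ≤ D (α + ν • ∑ k, hk k) := by
  obtain ⟨hν0, hν1⟩ := hν
  set s : Fin n → ℝ := ∑ k, hk k with hs
  have hsi : ∀ i, s i = hk (P i) i := by
    intro i
    have h1 : s i = ∑ k, hk k i := by simp [hs]
    rw [h1]
    exact Finset.sum_eq_single (P i)
      (fun k _ hne => hsupp k i (Ne.symm hne)) (by simp)
  -- X v ⬝ X v = v ⬝ (Xᵀ X) v
  have hXM : ∀ v : Fin n → ℝ,
      X.mulVec v ⬝ᵥ X.mulVec v = v ⬝ᵥ (X.transpose * X).mulVec v := by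
    intro v
    rw [← Matrix.mulVec_mulVec, Matrix.dotProduct_mulVec v X.transpose (X.mulVec v),
      Matrix.vecMul_transpose]
  -- block identity:  s ⬝ G s = ∑ k, hk k ⬝ M hk k
  have key : ∀ i j, s i * (G i j * s j)
      = ∑ k, hk k i * ((X.transpose * X) i j * hk k j) := by
    intro i j
    rw [Finset.sum_eq_single (P i)
      (fun k _ hne => by rw [hsupp k i (Ne.symm hne)]; ring) (by simp)]
    rw [hG i j, hsi i, hsi j]
    by_cases hij : P i = P j
    · rw [if_pos hij, hij]
    · rw [if_neg hij, hsupp (P i) j (fun hcon => hij hcon.symm)]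
      ring
  have hGsum : s ⬝ᵥ G.mulVec s = ∑ k, hk k ⬝ᵥ (X.transpose * X).mulVec (hk k) := by
    simp only [dotProduct, Matrix.mulVec, Finset.mul_sum]
    calc ∑ i, ∑ j, s i * (G i j * s j)
        = ∑ i, ∑ j, ∑ k, hk k i * ((X.transpose * X) i j * hk k j) :=
          Finset.sum_congr rfl fun i _ => Finset.sum_congr rfl fun j _ => key i j
      _ = ∑ i, ∑ k, ∑ j, hk k i * ((X.transpose * X) i j * hk k j) :=
          Finset.sum_congr rfl fun i _ => Finset.sum_comm
      _ = ∑ k, ∑ i, ∑ j, hk k i * ((X.transpose * X) i j * hk k j) :=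
          Finset.sum_comm
  -- the f bound
  have hf1 : f (α + ν • s) ≤ f α + ν * (gradf α ⬝ᵥ s)
      + (1 / (2 * lam * (n : ℝ) ^ 2)) * (ν ^ 2 * (s ⬝ᵥ (X.transpose * X).mulVec s)) := by
    have h1 := hf α (ν • s)
    have h2 : gradf α ⬝ᵥ (ν • s) = ν * (gradf α ⬝ᵥ s) := by
      simp [dotProduct_smul]
    have h3 : X.mulVec (ν • s) ⬝ᵥ X.mulVec (ν • s)
        = ν ^ 2 * (s ⬝ᵥ (X.transpose * X).mulVec s) := by
      rw [Matrix.mulVec_smul, smul_dotProduct, dotProduct_smul,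
        hXM s, smul_eq_mul, smul_eq_mul]
      ring
    rw [h2, h3] at h1
    linarith
  -- the quadratic bound
  have hc : (0:ℝ) ≤ 1 / (2 * lam * (n : ℝ) ^ 2) := by positivity
  have hq : (1 / (2 * lam * (n : ℝ) ^ 2)) * (ν ^ 2 * (s ⬝ᵥ (X.transpose * X).mulVec s))
      ≤ ν * ((σ' / (2 * lam * (n : ℝ) ^ 2)) * (s ⬝ᵥ G.mulVec s)) := by
    have h1 := hσ' s
    have h2 := mul_le_mul_of_nonneg_left h1 (mul_nonneg hν0 hc)
    calc (1 / (2 * lam * (n : ℝ) ^ 2)) * (ν ^ 2 * (s ⬝ᵥ (X.transpose * X).mulVec s))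
        = (ν * (1 / (2 * lam * (n : ℝ) ^ 2))) * (ν * (s ⬝ᵥ (X.transpose * X).mulVec s)) := by
          ring
      _ ≤ (ν * (1 / (2 * lam * (n : ℝ) ^ 2))) * (σ' * (s ⬝ᵥ G.mulVec s)) := h2
      _ = ν * ((σ' / (2 * lam * (n : ℝ) ^ 2)) * (s ⬝ᵥ G.mulVec s)) := by ring
  -- convexity of lstar
  have hconv : ∀ i, lstar i (-(α i + ν * s i))
      ≤ (1 - ν) * lstar i (-(α i)) + ν * lstar i (-(α i + s i)) := by
    intro i
    have h1 := (hlconv i).2 (Set.mem_univ (-(α i))) (Set.mem_univ (-(α i + s i)))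
      (show (0:ℝ) ≤ 1 - ν by linarith) hν0 (by ring)
    have harg : (1 - ν) • (-(α i)) + ν • (-(α i + s i)) = -(α i + ν * s i) := by
      simp only [smul_eq_mul]; ring
    rw [harg] at h1
    simpa [smul_eq_mul] using h1
  -- fiberwise sum
  have hfib : ∑ k, ∑ i ∈ Finset.univ.filter (fun i => P i = k),
      lstar i (-(α i + hk k i)) = ∑ i, lstar i (-(α i + s i)) := by
    rw [← Finset.sum_fiberwise Finset.univ P (fun i => lstar i (-(α i + s i)))]
    refine Finset.sum_congr rfl fun k _ => Finset.sum_congr rfl fun i hi => ?_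
    rw [Finset.mem_filter] at hi
    rw [hsi i, hi.2]
  -- sum of local objectives
  have hsumGk : ∑ k, Gk k = -f α - gradf α ⬝ᵥ s
      - (σ' / (2 * lam * (n : ℝ) ^ 2)) * (s ⬝ᵥ G.mulVec s)
      - (1 / (n : ℝ)) * ∑ i, lstar i (-(α i + s i)) := by
    have hK0 : (K : ℝ) ≠ 0 := by positivity
    simp only [hGk]
    rw [Finset.sum_sub_distrib, Finset.sum_sub_distrib, Finset.sum_sub_distrib]
    have e1 : ∑ _k : Fin K, -(f α / K) = -f α := by
      rw [Finset.sum_const, Finset.card_univ, Fintype.card_fin, nsmul_eq_mul]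
      field_simp
    have e2 : ∑ k, gradf α ⬝ᵥ hk k = gradf α ⬝ᵥ s := by
      simp only [dotProduct, hs, Finset.sum_apply, Finset.mul_sum]
      exact Finset.sum_comm
    have e3 : ∑ k, (σ' / (2 * lam * (n : ℝ) ^ 2)) * (X.mulVec (hk k) ⬝ᵥ X.mulVec (hk k))
        = (σ' / (2 * lam * (n : ℝ) ^ 2)) * (s ⬝ᵥ G.mulVec s) := by
      rw [← Finset.mul_sum, hGsum]
      congr 1
      exact Finset.sum_congr rfl fun k _ => hXM (hk k)
    have e4 : ∑ k, (1 / (n : ℝ)) * ∑ i ∈ Finset.univ.filter (fun i => P i = k),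
        lstar i (-(α i + hk k i)) = (1 / (n : ℝ)) * ∑ i, lstar i (-(α i + s i)) := by
      rw [← Finset.mul_sum, hfib]
    rw [e1, e2, e3, e4]
  -- the R bound
  have hRineq : (1 / (n : ℝ)) * ∑ i, lstar i (-(α i + ν * s i))
      ≤ (1 - ν) * ((1 / (n : ℝ)) * ∑ i, lstar i (-(α i)))
        + ν * ((1 / (n : ℝ)) * ∑ i, lstar i (-(α i + s i))) := by
    have hA : ∑ i, lstar i (-(α i + ν * s i))
        ≤ (1 - ν) * (∑ i, lstar i (-(α i))) + ν * (∑ i, lstar i (-(α i + s i))) := by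
      rw [Finset.mul_sum, Finset.mul_sum, ← Finset.sum_add_distrib]
      exact Finset.sum_le_sum fun i _ => hconv i
    have hn0 : (0:ℝ) ≤ 1 / (n : ℝ) := by positivity
    nlinarith [mul_le_mul_of_nonneg_left hA hn0]
  -- assemble
  rw [hD, hD, hR, hR, hsumGk]
  have hpt : ∀ i, (α + ν • s) i = α i + ν * s i := fun i => by
    simp [smul_eq_mul]
  simp only [hpt]
  linarith
end

section
/- Suppose a nonnegative sequence (ε_t)_{t ≥ t₀} satisfies ε_{t₀} ≤ 2B/c and, for every t ≥ t₀ and every s ∈ [0,1], ε_{t+1} ≤ (1 − c s) ε_t + B s², where c ∈ (0,1], B > 0. Then for all t ≥ t₀: ε_t ≤ (2B/c) · 1/(1 + (1/2) c (t − t₀)). -/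
/-- Sublinear O(1/t) convergence: if ε_{t₀} ≤ 2B/c and for every t ≥ t₀ and
every s ∈ [0,1], ε_{t+1} ≤ (1 − cs)ε_t + Bs², then for all t ≥ t₀,
ε_t ≤ (2B/c)·1/(1 + (1/2)c(t − t₀)). -/
theorem sublinear_recursion_bound
    (ε : ℕ → ℝ) (t₀ : ℕ) (c B : ℝ)
    (hc : 0 < c) (hc1 : c ≤ 1) (hB : 0 < B)
    (hnn : ∀ t, 0 ≤ ε t)
    (hinit : ε t₀ ≤ 2 * B / c)
    (hrec : ∀ t, t₀ ≤ t → ∀ s ∈ Set.Icc (0 : ℝ) 1,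
      ε (t + 1) ≤ (1 - c * s) * ε t + B * s ^ 2) :
    ∀ t, t₀ ≤ t →
      ε t ≤ (2 * B / c) * (1 / (1 + (1 / 2) * c * ((t - t₀ : ℕ) : ℝ))) := by
  intro t ht
  induction t, ht using Nat.le_induction with
  | base =>
    simp only [Nat.sub_self, Nat.cast_zero, mul_zero, add_zero, div_one, mul_one]
    exact hinit
  | succ t ht ih =>
    set D : ℝ := 1 + (1 / 2) * c * ((t - t₀ : ℕ) : ℝ) with hD
    have hDt : ((t + 1 - t₀ : ℕ) : ℝ) = ((t - t₀ : ℕ) : ℝ) + 1 := by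
      have h : t + 1 - t₀ = (t - t₀) + 1 := by omega
      rw [h]; push_cast; ring
    have hn : (0 : ℝ) ≤ ((t - t₀ : ℕ) : ℝ) := Nat.cast_nonneg _
    have hD1 : 1 ≤ D := by rw [hD]; nlinarith
    have hD0 : (0 : ℝ) < D := by linarith
    have hs : (1 / D) ∈ Set.Icc (0 : ℝ) 1 :=
      ⟨by positivity, by rw [div_le_one hD0]; exact hD1⟩
    have hcoef : 0 ≤ 1 - c * (1 / D) := by
      rw [sub_nonneg]
      calc c * (1 / D) ≤ 1 * (1 / D) := by gcongr
        _ ≤ 1 := by rw [one_mul, div_le_one hD0]; exact hD1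
    have key : ε (t + 1) ≤ (1 - c * (1 / D)) * ((2 * B / c) * (1 / D)) + B * (1 / D) ^ 2 := by
      refine (hrec t ht (1 / D) hs).trans ?_
      gcongr
    rw [hDt]
    have hD' : 1 + 1 / 2 * c * (((t - t₀ : ℕ) : ℝ) + 1) = D + c / 2 := by rw [hD]; ring
    rw [hD']
    have hD'0 : (0 : ℝ) < D + c / 2 := add_pos hD0 (by linarith)
    refine key.trans ?_
    rw [← sub_nonneg]
    have heq : 2 * B / c * (1 / (D + c / 2)) -
        ((1 - c * (1 / D)) * (2 * B / c * (1 / D)) + B * (1 / D) ^ 2)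
        = B * c / (2 * D ^ 2 * (D + c / 2)) := by
      have hDne : D ≠ 0 := ne_of_gt hD0
      have hD'ne : D + c / 2 ≠ 0 := ne_of_gt hD'0
      have hc' : c ≠ 0 := ne_of_gt hc
      field_simp
      ring
    rw [heq]
    positivity
end

section
/- Let ℓ_i* be γ-strongly convex (γ ≥ 0), D(α) = −f(α) − (1/n)Σℓ_i*(−α_i) with f satisfying the quadratic upper bound with matrix XᵀX/(λn²), and define for u with −u_i ∈ ∂ℓ_i(w(α)ᵀx_i): R := −(λγn(1−s)/(σ's))‖u−α‖² + Σ_k ‖X (u−α)_{[k]}‖². If for each block σ_k := max_{β≠0, supp β ⊆ P_k} ‖Xβ‖²/‖β‖² ≤ σ_max, then choosing s = λγn/(λγn + σ_max σ') ∈ [0,1] gives R ≤ 0. -/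
/-!
The block restrictions of `u - α` split `‖u - α‖²` exactly, so the block bounds add up to
`∑ k, ‖X (u - α)_[k]‖² ≤ σ_max ‖u - α‖²`; the step size `s` is chosen precisely so that the
coefficient `λγn(1 - s)/(σ' s)` equals `σ_max`.
-/

open Matrix

def blockRestrict {ι κ R : Type*} [DecidableEq κ] [Zero R] (P : ι → κ) (k : κ) (v : ι → R) :
    ι → R :=
  fun i => if P i = k then v i else 0

section Blocks

variable {ι κ R : Type*} [Fintype ι] [Fintype κ] [DecidableEq κ]

theorem sum_blockRestrict_dotProduct_self [CommSemiring R] (P : ι → κ) (v : ι → R) :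
    ∑ k, blockRestrict P k v ⬝ᵥ blockRestrict P k v = v ⬝ᵥ v := by
  simp only [dotProduct, blockRestrict]
  rw [Finset.sum_comm]
  refine Finset.sum_congr rfl fun i _ => ?_
  rw [Finset.sum_eq_single (P i) (fun k _ hk => by simp [Ne.symm hk]) (by simp)]
  simp

theorem sum_mulVec_blockRestrict_le [CommRing R] [PartialOrder R] [IsOrderedRing R] {m : Type*}
    [Fintype m] (X : Matrix m ι R) (P : ι → κ) (σ : R)
    (hblock : ∀ (k : κ) (β : ι → R), (∀ i, P i ≠ k → β i = 0) →
      X *ᵥ β ⬝ᵥ X *ᵥ β ≤ σ * (β ⬝ᵥ β))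
    (v : ι → R) :
    ∑ k, X *ᵥ blockRestrict P k v ⬝ᵥ X *ᵥ blockRestrict P k v ≤ σ * (v ⬝ᵥ v) :=
  calc ∑ k, X *ᵥ blockRestrict P k v ⬝ᵥ X *ᵥ blockRestrict P k v
      ≤ ∑ k, σ * (blockRestrict P k v ⬝ᵥ blockRestrict P k v) :=
        Finset.sum_le_sum fun k _ => hblock k _ fun i hi => if_neg hi
    _ = σ * (v ⬝ᵥ v) := by rw [← Finset.mul_sum, sum_blockRestrict_dotProduct_self]

end Blocks

section StepSize

variable {K : Type*} [Field K] [LinearOrder K] [IsStrictOrderedRing K] {a b c : K}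

theorem div_add_mem_Icc (ha : 0 < a) (hb : 0 ≤ b) : a / (a + b) ∈ Set.Icc (0 : K) 1 :=
  ⟨by positivity, (div_le_one (by positivity)).2 (le_add_of_nonneg_right hb)⟩

theorem mul_one_sub_div_mul_eq (ha : 0 < a) (hb : 0 ≤ b) (hc : 0 < c) :
    a * (1 - a / (a + b * c)) / (c * (a / (a + b * c))) = b := by
  have hden : 0 < a + b * c := by positivity
  field_simp
  ring

end StepSize

/-- With the step-size choice s = λγn/(λγn + σ_max σ'), the quantity
R = −(λγn(1−s)/(σ's))‖u−α‖² + Σ_k ‖X(u−α)_[k]‖² is nonpositive,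
provided each block spectral norm is bounded by σ_max. -/
theorem R_nonpositive_for_smooth_step
    {d n K : ℕ} (hn : 1 ≤ n) (lam γ σmax σ' : ℝ)
    (hlam : 0 < lam) (hγ : 0 < γ) (hσ' : 1 ≤ σ') (hσmax : 0 ≤ σmax)
    (X : Matrix (Fin d) (Fin n) ℝ) (P : Fin n → Fin K)
    (hblock : ∀ (k : Fin K) (β : Fin n → ℝ), (∀ i, P i ≠ k → β i = 0) →
      X.mulVec β ⬝ᵥ X.mulVec β ≤ σmax * (β ⬝ᵥ β))
    (u α : Fin n → ℝ)
    (s : ℝ) (hs : s = lam * γ * n / (lam * γ * n + σmax * σ'))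
    (R : ℝ)
    (hR : R = -(lam * γ * n * (1 - s) / (σ' * s)) * ((u - α) ⬝ᵥ (u - α))
      + ∑ k : Fin K,
          (X.mulVec (fun i => if P i = k then u i - α i else 0)
            ⬝ᵥ X.mulVec (fun i => if P i = k then u i - α i else 0))) :
    s ∈ Set.Icc (0 : ℝ) 1 ∧ R ≤ 0 := by
  have hn' : (0 : ℝ) < n := by exact_mod_cast hn
  have hA : 0 < lam * γ * n := by positivity
  have hσ'pos : 0 < σ' := zero_lt_one.trans_le hσ'
  subst hs hR
  refine ⟨div_add_mem_Icc hA (by positivity), ?_⟩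
  rw [mul_one_sub_div_mul_eq hA hσmax hσ'pos, neg_mul, neg_add_le_iff_le_add, add_zero]
  exact sum_mulVec_blockRestrict_le X P σmax hblock (u - α)
end
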